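/- Let Δ be a weak generalized root system in V with Weyl group W, and let v ∈ V. If S and S' are two maximal iso-sets each orthogonal to v, then there exists w ∈ W with w(v) = v and w(S) = S'. Consequently W acts transitively on the set of maximal iso-sets of Δ, and all maximal iso-sets have the same cardinality. -/

import Mathlib

/-- `Δ` is a weak generalized root system with respect to the form `b`. -/
def IsWGRS {V : Type} [AddCommGroup V] [Module ℂ V]
    (b : LinearMap.BilinForm ℂ V) (Δ : Set V) : Prop :=
  Δ.Finite ∧ (0 : V) ∉ Δ ∧ (∀ α ∈ Δ, -α ∈ Δ) ∧
  (∀ α ∈ Δ, b α α ≠ 0 → ∀ β ∈ Δ,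
    (∃ k : ℤ, 2 * b α β = (k : ℂ) * b α α) ∧ β - (2 * b α β / b α α) • α ∈ Δ) ∧
  (∀ α ∈ Δ, b α α = 0 → ∀ β ∈ Δ, b α β ≠ 0 → (β + α ∈ Δ ∨ β - α ∈ Δ))

/-- An iso-set: a symmetric set of pairwise orthogonal (hence isotropic) roots. -/
def IsIsoSet {V : Type} [AddCommGroup V] [Module ℂ V]
    (b : LinearMap.BilinForm ℂ V) (Δ S : Set V) : Prop :=
  S ⊆ Δ ∧ (∀ s ∈ S, b s s = 0) ∧ (∀ s ∈ S, -s ∈ S) ∧ ∀ s ∈ S, ∀ t ∈ S, b s t = 0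

/-- The Weyl group of `Δ`: the subgroup of linear automorphisms generated by the
reflections in anisotropic roots. -/
def WeylGroup {V : Type} [AddCommGroup V] [Module ℂ V]
    (b : LinearMap.BilinForm ℂ V) (Δ : Set V) : Subgroup (V ≃ₗ[ℂ] V) :=
  Subgroup.closure
    {g : V ≃ₗ[ℂ] V | ∃ α ∈ Δ, b α α ≠ 0 ∧ ∀ x : V, g x = x - (2 * b α x / b α α) • α}

/-!
Induct on `|S' \ S|`. If `α ∈ S \ S'`, maximality of `S'` yields `β ∈ S'` with `(α, β) ≠ 0`;
after replacing `β` by `-β` the isotropy axiom makes `α - β` a root, anisotropic since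
`(α - β, α - β) = -2 (α, β)`. The reflection in `α - β` fixes `v` and `S ∩ S'` pointwise and
sends `α` to `β`, so it carries `S` to a maximal iso-set orthogonal to `v` that is closer to `S'`.
Taking `v = 0` gives transitivity on maximal iso-sets, hence equal cardinalities.
-/

open Set Function

section WGRS
variable {V : Type} [AddCommGroup V] [Module ℂ V] {b : LinearMap.BilinForm ℂ V} {Δ : Set V}

lemma IsWGRS.finite (hΔ : IsWGRS b Δ) : Δ.Finite := hΔ.1

lemma IsWGRS.neg_mem (hΔ : IsWGRS b Δ) {α : V} (hα : α ∈ Δ) : -α ∈ Δ := hΔ.2.2.1 α hα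

lemma IsWGRS.add_mem_or_sub_mem (hΔ : IsWGRS b Δ) {α β : V} (hα : α ∈ Δ) (hαα : b α α = 0)
    (hβ : β ∈ Δ) (hαβ : b α β ≠ 0) : β + α ∈ Δ ∨ β - α ∈ Δ :=
  hΔ.2.2.2.2 α hα hαα β hβ hαβ

end WGRS

section OrthoReflection
variable {V : Type} [AddCommGroup V] [Module ℂ V] (b : LinearMap.BilinForm ℂ V)

noncomputable def orthoReflection (γ : V) (hγ : b γ γ ≠ 0) : V ≃ₗ[ℂ] V :=
  Module.reflection (f := (2 / b γ γ) • b γ) (x := γ) (by simp [hγ])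

variable {b}

lemma orthoReflection_apply (γ : V) (hγ : b γ γ ≠ 0) (x : V) :
    orthoReflection b γ hγ x = x - (2 * b γ x / b γ γ) • γ := by
  rw [orthoReflection, Module.reflection_apply, LinearMap.smul_apply, smul_eq_mul,
    mul_div_right_comm]

variable {γ : V} {hγ : b γ γ ≠ 0}

lemma orthoReflection_apply_of_orthogonal {x : V} (hx : b γ x = 0) :
    orthoReflection b γ hγ x = x := by
  simp [orthoReflection_apply, hx]

lemma orthoReflection_involutive : Involutive (orthoReflection b γ hγ) :=
  Module.involutive_reflection _

lemma orthoReflection_mem_weylGroup {Δ : Set V} (hγΔ : γ ∈ Δ) :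
    orthoReflection b γ hγ ∈ WeylGroup b Δ :=
  Subgroup.subset_closure ⟨γ, hγΔ, hγ, orthoReflection_apply γ hγ⟩

lemma orthoReflection_isometry (hb : b.IsSymm) (x y : V) :
    b (orthoReflection b γ hγ x) (orthoReflection b γ hγ y) = b x y := by
  simp only [orthoReflection_apply, map_sub, map_smul, LinearMap.sub_apply,
    LinearMap.smul_apply, smul_eq_mul, hb.eq x γ]
  field_simp
  ring

lemma IsWGRS.mapsTo_orthoReflection {Δ : Set V} (hΔ : IsWGRS b Δ) (hγΔ : γ ∈ Δ) :
    MapsTo (orthoReflection b γ hγ) Δ Δ := fun β hβ => by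
  rw [orthoReflection_apply]
  exact (hΔ.2.2.2.1 γ hγΔ hγ β hβ).2

lemma LinearMap.BilinForm.IsSymm.apply_sub_sub_of_isotropic (hb : b.IsSymm) {α β : V}
    (hα : b α α = 0) (hβ : b β β = 0) :
    b (α - β) (α - β) = -(2 * b α β) := by
  simp only [map_sub, LinearMap.sub_apply, hα, hβ, hb.eq β α]
  ring

lemma orthoReflection_sub_apply_left (hb : b.IsSymm) {α β : V} (hα : b α α = 0)
    (hβ : b β β = 0) (h : b (α - β) (α - β) ≠ 0) : orthoReflection b (α - β) h α = β := by
  have hαβ : b α β ≠ 0 := by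
    rw [hb.apply_sub_sub_of_isotropic hα hβ] at h
    simpa using h
  have : b (α - β) α = -b α β := by simp [hα, hb.eq β α]
  rw [orthoReflection_apply, this, hb.apply_sub_sub_of_isotropic hα hβ]
  field_simp
  simp

end OrthoReflection

lemma Maximal.image_of_involutive {α : Type*} {P : Set α → Prop} {f : α → α} (hf : Involutive f)
    (hP : ∀ S, P S → P (f '' S)) {S : Set α} (hS : Maximal P S) : Maximal P (f '' S) := by
  refine ⟨hP S hS.1, fun T hT hST => ?_⟩
  have hTS : f '' T ⊆ S := hS.2 (hP T hT) fun x hx => ⟨f x, hST ⟨x, hx, rfl⟩, hf x⟩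
  exact fun t ht => ⟨f t, hTS ⟨t, ht, rfl⟩, hf t⟩

section IsoSet
variable {V : Type} [AddCommGroup V] [Module ℂ V] {b : LinearMap.BilinForm ℂ V} {Δ : Set V}

lemma IsIsoSet.subset {S : Set V} (hS : IsIsoSet b Δ S) : S ⊆ Δ := hS.1

lemma IsIsoSet.isotropic {S : Set V} (hS : IsIsoSet b Δ S) {s : V} (hs : s ∈ S) : b s s = 0 :=
  hS.2.1 s hs

lemma IsIsoSet.neg_mem {S : Set V} (hS : IsIsoSet b Δ S) {s : V} (hs : s ∈ S) : -s ∈ S :=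
  hS.2.2.1 s hs

lemma IsIsoSet.orthogonal {S : Set V} (hS : IsIsoSet b Δ S) {s t : V} (hs : s ∈ S) (ht : t ∈ S) :
    b s t = 0 :=
  hS.2.2.2 s hs t ht

def IsOrthIsoSet (b : LinearMap.BilinForm ℂ V) (Δ : Set V) (v : V) (S : Set V) : Prop :=
  IsIsoSet b Δ S ∧ ∀ s ∈ S, b v s = 0

lemma IsIsoSet.image {S : Set V} (hS : IsIsoSet b Δ S) {g : V ≃ₗ[ℂ] V}
    (hg : ∀ x y, b (g x) (g y) = b x y) (hgΔ : MapsTo g Δ Δ) : IsIsoSet b Δ (g '' S) := by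
  obtain ⟨hSΔ, hiso, hneg, horth⟩ := hS
  refine ⟨hgΔ.mono_left hSΔ |>.image_subset, ?_, ?_, ?_⟩
  · rintro - ⟨s, hs, rfl⟩
    rw [hg]; exact hiso s hs
  · rintro - ⟨s, hs, rfl⟩
    exact ⟨-s, hneg s hs, map_neg g s⟩
  · rintro - ⟨s, hs, rfl⟩ - ⟨t, ht, rfl⟩
    rw [hg]; exact horth s hs t ht

lemma IsOrthIsoSet.image {v : V} {S : Set V} (hS : IsOrthIsoSet b Δ v S) {g : V ≃ₗ[ℂ] V}
    (hg : ∀ x y, b (g x) (g y) = b x y) (hgΔ : MapsTo g Δ Δ) (hgv : g v = v) :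
    IsOrthIsoSet b Δ v (g '' S) := by
  refine ⟨hS.1.image hg hgΔ, ?_⟩
  rintro - ⟨s, hs, rfl⟩
  calc b v (g s) = b (g v) (g s) := by rw [hgv]
    _ = 0 := (hg v s).trans (hS.2 s hs)

lemma IsOrthIsoSet.insert_neg_insert (hb : b.IsSymm) (hΔ : IsWGRS b Δ) {v α : V} {S : Set V}
    (hS : IsOrthIsoSet b Δ v S) (hαΔ : α ∈ Δ) (hαα : b α α = 0) (hvα : b v α = 0)
    (hαS : ∀ s ∈ S, b α s = 0) : IsOrthIsoSet b Δ v (insert α (insert (-α) S)) := by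
  obtain ⟨⟨hSΔ, hiso, hneg, horth⟩, hvS⟩ := hS
  have hSα : ∀ s ∈ S, b s α = 0 := fun s hs => (hb.eq s α).trans (hαS s hs)
  refine ⟨⟨?_, ?_, ?_, ?_⟩, ?_⟩
  · exact insert_subset hαΔ (insert_subset (hΔ.neg_mem hαΔ) hSΔ)
  · simp only [forall_mem_insert, map_neg, LinearMap.neg_apply, neg_neg]
    exact ⟨hαα, hαα, hiso⟩
  · rintro s (rfl | rfl | hs)
    · exact mem_insert_of_mem _ (mem_insert _ _)
    · rw [neg_neg]; exact mem_insert _ _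
    · exact mem_insert_of_mem _ (mem_insert_of_mem _ (hneg s hs))
  · simp only [forall_mem_insert, map_neg, LinearMap.neg_apply, neg_eq_zero]
    exact ⟨⟨hαα, hαα, hαS⟩, ⟨hαα, hαα, hαS⟩, fun s hs => ⟨hSα s hs, hSα s hs, horth s hs⟩⟩
  · simp only [forall_mem_insert, map_neg, neg_eq_zero]
    exact ⟨hvα, hvα, hvS⟩

end IsoSet

section Exchange
variable {V : Type} [AddCommGroup V] [Module ℂ V] {b : LinearMap.BilinForm ℂ V} {Δ : Set V}

lemma Maximal.exists_not_orthogonal (hb : b.IsSymm) (hΔ : IsWGRS b Δ) {v α : V} {S : Set V}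
    (hS : Maximal (IsOrthIsoSet b Δ v) S) (hαΔ : α ∈ Δ) (hαα : b α α = 0) (hvα : b v α = 0)
    (hαS : α ∉ S) : ∃ β ∈ S, b α β ≠ 0 := by
  by_contra! horth
  exact hαS <| hS.2 (hS.1.insert_neg_insert hb hΔ hαΔ hαα hvα horth)
    ((subset_insert _ _).trans (subset_insert _ _)) (mem_insert _ _)

lemma IsIsoSet.exists_sub_mem (hΔ : IsWGRS b Δ) {α β₀ : V} {S : Set V} (hS : IsIsoSet b Δ S)
    (hαΔ : α ∈ Δ) (hαα : b α α = 0) (hβ₀ : β₀ ∈ S) (hαβ₀ : b α β₀ ≠ 0) :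
    ∃ β ∈ S, b α β ≠ 0 ∧ α - β ∈ Δ := by
  rcases hΔ.add_mem_or_sub_mem hαΔ hαα (hS.subset hβ₀) hαβ₀ with h | h
  · exact ⟨-β₀, hS.neg_mem hβ₀, by simpa using hαβ₀, by rwa [sub_neg_eq_add, add_comm]⟩
  · exact ⟨β₀, hβ₀, hαβ₀, by simpa using hΔ.neg_mem h⟩

lemma Maximal.exists_weylGroup_ncard_sdiff_lt (hb : b.IsSymm) (hΔ : IsWGRS b Δ) {v : V}
    {S S' : Set V} (hS : Maximal (IsOrthIsoSet b Δ v) S) (hS' : Maximal (IsOrthIsoSet b Δ v) S')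
    (hSS' : ¬S ⊆ S') :
    ∃ w ∈ WeylGroup b Δ, w v = v ∧ Maximal (IsOrthIsoSet b Δ v) ((w : V → V) '' S) ∧
      (S' \ (w : V → V) '' S).ncard < (S' \ S).ncard := by
  obtain ⟨α, hαS, hαS'⟩ := not_subset.mp hSS'
  have hαΔ : α ∈ Δ := hS.1.1.subset hαS
  have hαα : b α α = 0 := hS.1.1.isotropic hαS
  obtain ⟨β₀, hβ₀, hαβ₀⟩ := hS'.exists_not_orthogonal hb hΔ hαΔ hαα (hS.1.2 α hαS) hαS'
  obtain ⟨β, hβS', hαβ, hγΔ⟩ := hS'.1.1.exists_sub_mem hΔ hαΔ hαα hβ₀ hαβ₀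
  have hββ : b β β = 0 := hS'.1.1.isotropic hβS'
  have hγ : b (α - β) (α - β) ≠ 0 := by
    rw [hb.apply_sub_sub_of_isotropic hαα hββ]
    simpa using hαβ
  set s := orthoReflection b (α - β) hγ
  have hfix : ∀ x, b α x = 0 → b β x = 0 → s x = x := fun x hαx hβx =>
    orthoReflection_apply_of_orthogonal (by simp [hαx, hβx])
  have hsv : s v = v := hfix v ((hb.eq α v).trans (hS.1.2 α hαS))
    ((hb.eq β v).trans (hS'.1.2 β hβS'))
  have hsub : S' \ s '' S ⊆ (S' \ S) \ {β} := by
    rintro t ⟨htS', htsS⟩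
    refine ⟨⟨htS', fun htS => htsS ⟨t, htS, ?_⟩⟩, ?_⟩
    · exact hfix t (hS.1.1.orthogonal hαS htS) (hS'.1.1.orthogonal hβS' htS')
    · rintro rfl
      exact htsS ⟨α, hαS, orthoReflection_sub_apply_left hb hαα hββ hγ⟩
  have hβS : β ∉ S := fun h => hαβ (hS.1.1.orthogonal hαS h)
  have hfin : (S' \ S).Finite := (hΔ.finite.subset hS'.1.1.subset).sdiff
  refine ⟨s, orthoReflection_mem_weylGroup hγΔ, hsv,
    hS.image_of_involutive orthoReflection_involutive
      (fun T hT => hT.image (orthoReflection_isometry hb) (hΔ.mapsTo_orthoReflection hγΔ) hsv),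
    (ncard_le_ncard hsub hfin.sdiff).trans_lt (ncard_sdiff_singleton_lt_of_mem ⟨hβS', hβS⟩ hfin)⟩

theorem Maximal.exists_weylGroup_image_eq (hb : b.IsSymm) (hΔ : IsWGRS b Δ) {v : V}
    {S S' : Set V} (hS : Maximal (IsOrthIsoSet b Δ v) S) (hS' : Maximal (IsOrthIsoSet b Δ v) S') :
    ∃ w ∈ WeylGroup b Δ, w v = v ∧ (w : V → V) '' S = S' := by
  induction hn : (S' \ S).ncard using Nat.strong_induction_on generalizing S with
  | _ n ih =>
  by_cases hSS' : S ⊆ S'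
  · exact ⟨1, one_mem _, rfl, by simpa using hS.eq_of_le hS'.1 hSS'⟩
  obtain ⟨w₀, hw₀, hw₀v, hmax, hlt⟩ := hS.exists_weylGroup_ncard_sdiff_lt hb hΔ hS' hSS'
  obtain ⟨w, hw, hwv, hwS⟩ := ih _ (hn ▸ hlt) hmax rfl
  refine ⟨w * w₀, mul_mem hw hw₀, by simp [hw₀v, hwv], ?_⟩
  rw [← hwS, ← image_comp]
  rfl

end Exchange

theorem stmt19_general {V : Type} [AddCommGroup V] [Module ℂ V]
    (b : LinearMap.BilinForm ℂ V) (hsymm : b.IsSymm)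
    (Δ : Set V) (hΔ : IsWGRS b Δ) :
    (∀ (v : V) (S S' : Set V),
      IsIsoSet b Δ S → (∀ s ∈ S, b v s = 0) →
      (∀ T : Set V, IsIsoSet b Δ T → (∀ t ∈ T, b v t = 0) → S ⊆ T → T = S) →
      IsIsoSet b Δ S' → (∀ s ∈ S', b v s = 0) →
      (∀ T : Set V, IsIsoSet b Δ T → (∀ t ∈ T, b v t = 0) → S' ⊆ T → T = S') →
      ∃ w ∈ WeylGroup b Δ, w v = v ∧ (w : V → V) '' S = S') ∧
    (∀ S S' : Set V,
      IsIsoSet b Δ S → (∀ T : Set V, IsIsoSet b Δ T → S ⊆ T → T = S) →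
      IsIsoSet b Δ S' → (∀ T : Set V, IsIsoSet b Δ T → S' ⊆ T → T = S') →
      (∃ w ∈ WeylGroup b Δ, (w : V → V) '' S = S') ∧ S.ncard = S'.ncard) := by
  have maximal_of {v : V} {S : Set V} (hS : IsIsoSet b Δ S) (hvS : ∀ s ∈ S, b v s = 0)
      (hmax : ∀ T, IsIsoSet b Δ T → (∀ t ∈ T, b v t = 0) → S ⊆ T → T = S) :
      Maximal (IsOrthIsoSet b Δ v) S :=
    maximal_iff.2 ⟨⟨hS, hvS⟩, fun T hT hST => (hmax T hT.1 hT.2 hST).symm⟩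
  refine ⟨fun v S S' hS hvS hSmax hS' hvS' hS'max =>
    (maximal_of hS hvS hSmax).exists_weylGroup_image_eq hsymm hΔ (maximal_of hS' hvS' hS'max),
    fun S S' hS hSmax hS' hS'max => ?_⟩
  obtain ⟨w, hw, -, rfl⟩ :=
    (maximal_of (v := 0) hS (by simp) fun T hT _ => hSmax T hT).exists_weylGroup_image_eq
      hsymm hΔ (maximal_of hS' (by simp) fun T hT _ => hS'max T hT)
  exact ⟨⟨w, hw, rfl⟩, (ncard_image_of_injective S w.injective).symm⟩

/-- Any two maximal iso-sets orthogonal to `v` are conjugate by an element of the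
Weyl group fixing `v`; consequently `W` acts transitively on maximal iso-sets and
all maximal iso-sets have the same cardinality. -/
theorem stmt19 {V : Type} [AddCommGroup V] [Module ℂ V] [FiniteDimensional ℂ V]
    (b : LinearMap.BilinForm ℂ V) (hsymm : b.IsSymm) (hnd : b.Nondegenerate)
    (Δ : Set V) (hΔ : IsWGRS b Δ) :
    (∀ (v : V) (S S' : Set V),
      IsIsoSet b Δ S → (∀ s ∈ S, b v s = 0) →
      (∀ T : Set V, IsIsoSet b Δ T → (∀ t ∈ T, b v t = 0) → S ⊆ T → T = S) →
      IsIsoSet b Δ S' → (∀ s ∈ S', b v s = 0) →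
      (∀ T : Set V, IsIsoSet b Δ T → (∀ t ∈ T, b v t = 0) → S' ⊆ T → T = S') →
      ∃ w ∈ WeylGroup b Δ, w v = v ∧ (w : V → V) '' S = S') ∧
    (∀ S S' : Set V,
      IsIsoSet b Δ S → (∀ T : Set V, IsIsoSet b Δ T → S ⊆ T → T = S) →
      IsIsoSet b Δ S' → (∀ T : Set V, IsIsoSet b Δ T → S' ⊆ T → T = S') →
      (∃ w ∈ WeylGroup b Δ, (w : V → V) '' S = S') ∧ S.ncard = S'.ncard) :=
  stmt19_general b hsymm Δ hΔ
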